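/- Let d ≥ 1 be an integer and let 0 < α < 1/2. For each natural number s, let G(d,s) denote the number of monotone lattice paths from (0,0) to (s, s+d) using unit right and unit up steps such that no point of the path other than the final endpoint lies on the line y = x − 2 or on the line y = x + d. Then Σ'_{s=0}^{∞} s·G(d,s)·(α(1−α))^s = (d+2)·α(1−α)·((1−α)^{d+1} + α^{d+1})/((1−α)^{d+2} − α^{d+2})² − 2α(1−α)/((1−2α)·((1−α)^{d+2} − α^{d+2})). -/

import Mathlib

/-!
Reading a step sequence as a walk on the height `x − y + d` (right steps go up, up steps go
down), the paths counted by `G(d,s)` are the walks of length `2s + d` from height `d` that leave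
the strip `(0, d + 2)` for the first time at their last step, through `0`. Splitting off the
first step, the generating functions `F_j(x) = ∑ₛ W_j(2s + j) xˢ` of such walks from height `j`
satisfy `F_{j+1} = x F_{j+2} + F_j` with `F_0 = 1` and `F_{d+2} = 0`. At `x = α(1 − α)` the
characteristic roots of this recurrence are `α⁻¹` and `(1 − α)⁻¹`, which pins down `F_d` and gives
the first identity. The coefficients grow at most like `4ˢ`, so the series can be differentiated
termwise in `α`; comparing with the derivative of the closed form gives the second identity.
-/

/-- Number of right steps among the first `k` steps of a step sequence
(`true` = unit right step, `false` = unit up step). -/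
def rightsBefore {n : ℕ} (f : Fin n → Bool) (k : ℕ) : ℕ :=
  (Finset.univ.filter fun j : Fin n => j.val < k ∧ f j = true).card

/-- Number of up steps among the first `k` steps of a step sequence. -/
def upsBefore {n : ℕ} (f : Fin n → Bool) (k : ℕ) : ℕ :=
  (Finset.univ.filter fun j : Fin n => j.val < k ∧ f j = false).card

/-- `G d s`: the number of monotone lattice paths from `(0,0)` to `(s, s+d)`
using unit right and unit up steps such that no point of the path other than
the final endpoint lies on the line `y = x − 2` or on the line `y = x + d`. -/
noncomputable def latticeG (d s : ℕ) : ℕ :=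
  Nat.card {f : Fin (2 * s + d) → Bool //
    rightsBefore f (2 * s + d) = s ∧
    ∀ k < 2 * s + d,
      upsBefore f k ≠ rightsBefore f k + d ∧
      rightsBefore f k ≠ upsBefore f k + 2}

@[simp]
lemma rightsBefore_zero {n : ℕ} (f : Fin n → Bool) : rightsBefore f 0 = 0 := by
  simp [rightsBefore]

@[simp]
lemma upsBefore_zero {n : ℕ} (f : Fin n → Bool) : upsBefore f 0 = 0 := by
  simp [upsBefore]

lemma rightsBefore_cons {n : ℕ} (b : Bool) (g : Fin n → Bool) (k : ℕ) :
    rightsBefore (Fin.cons b g : Fin (n + 1) → Bool) (k + 1) = b.toNat + rightsBefore g k := by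
  unfold rightsBefore
  rw [Finset.card_filter, Finset.card_filter, Fin.sum_univ_succ]
  cases b <;> simp

lemma upsBefore_cons {n : ℕ} (b : Bool) (g : Fin n → Bool) (k : ℕ) :
    upsBefore (Fin.cons b g : Fin (n + 1) → Bool) (k + 1) = (!b).toNat + upsBefore g k := by
  unfold upsBefore
  rw [Finset.card_filter, Finset.card_filter, Fin.sum_univ_succ]
  cases b <;> simp

lemma rightsBefore_add_upsBefore_self {n : ℕ} (f : Fin n → Bool) :
    rightsBefore f n + upsBefore f n = n := by
  unfold rightsBefore upsBefore
  simp only [Fin.is_lt, true_and, ← Bool.not_eq_true]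
  rw [Finset.card_filter_add_card_filter_not, Finset.card_univ, Fintype.card_fin]

lemma Nat.card_subtype_fin_succ_bool {n : ℕ} (P : (Fin (n + 1) → Bool) → Prop) :
    Nat.card {f // P f} =
      Nat.card {g : Fin n → Bool // P (Fin.cons true g)} +
        Nat.card {g : Fin n → Bool // P (Fin.cons false g)} := by
  calc Nat.card {f // P f}
      = Nat.card {p : Bool × (Fin n → Bool) // P (Fin.cons p.1 p.2)} :=
        Nat.card_congr ((Fin.consEquiv fun _ => Bool).subtypeEquiv fun _ => Iff.rfl).symm
    _ = Nat.card (Σ b : Bool, {g : Fin n → Bool // P (Fin.cons b g)}) :=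
        Nat.card_congr (Equiv.subtypeProdEquivSigmaSubtype fun b g => P (Fin.cons b g))
    _ = _ := by rw [Nat.card_sigma, Fintype.sum_bool]

/-- Read as a walk from height `j` (right step `+1`, up step `-1`), `f` ends at `0` and visits
neither `0` nor `m` before its last step. -/
def ExitsAtZero (m j : ℕ) {n : ℕ} (f : Fin n → Bool) : Prop :=
  upsBefore f n = j + rightsBefore f n ∧
    ∀ k < n, j + rightsBefore f k ≠ upsBefore f k ∧ j + rightsBefore f k ≠ upsBefore f k + m

noncomputable def exitCount (m j n : ℕ) : ℕ :=
  Nat.card {f : Fin n → Bool // ExitsAtZero m j f}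

lemma exitsAtZero_cons {m j n : ℕ} (b : Bool) (g : Fin n → Bool) (hj : j + 1 < m) :
    ExitsAtZero m (j + 1) (Fin.cons b g : Fin (n + 1) → Bool) ↔
      ExitsAtZero m (if b then j + 2 else j) g := by
  unfold ExitsAtZero
  rw [Nat.forall_lt_succ_left]
  cases b <;>
    simp only [rightsBefore_cons, upsBefore_cons, rightsBefore_zero, upsBefore_zero, Bool.not_true,
      Bool.not_false, Bool.toNat_true, Bool.toNat_false, if_true, Bool.false_eq_true, if_false] <;>
    exact ⟨fun ⟨hend, _, hbefore⟩ => ⟨by omega, fun k hk => by have := hbefore k hk; omega⟩,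
      fun ⟨hend, hbefore⟩ => ⟨by omega, by omega, fun k hk => by have := hbefore k hk; omega⟩⟩

lemma exitCount_succ_succ {m j n : ℕ} (hj : j + 1 < m) :
    exitCount m (j + 1) (n + 1) = exitCount m (j + 2) n + exitCount m j n := by
  simp only [exitCount, Nat.card_subtype_fin_succ_bool, exitsAtZero_cons _ _ hj, if_true,
    Bool.false_eq_true, if_false]

lemma exitCount_eq_zero_of_lt {m j n : ℕ} (h : n < j) : exitCount m j n = 0 := by
  refine @Nat.card_of_isEmpty _ ⟨fun f => ?_⟩
  have := rightsBefore_add_upsBefore_self f.1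
  have := f.2.1
  omega

lemma exitCount_from_zero (m : ℕ) {n : ℕ} (hn : 0 < n) : exitCount m 0 n = 0 := by
  refine @Nat.card_of_isEmpty _ ⟨fun f => ?_⟩
  simpa using (f.2.2 0 hn).1

lemma exitCount_from_top (m : ℕ) {n : ℕ} (hn : 0 < n) : exitCount m m n = 0 := by
  refine @Nat.card_of_isEmpty _ ⟨fun f => ?_⟩
  simpa using (f.2.2 0 hn).2

lemma exitCount_zero_zero (m : ℕ) : exitCount m 0 0 = 1 := by
  rw [exitCount, Nat.card_eq_one_iff_unique]
  exact ⟨inferInstance, ⟨⟨Fin.elim0, by simp [ExitsAtZero]⟩⟩⟩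

lemma exitCount_self {m j : ℕ} (hj : j < m) : exitCount m j j = 1 := by
  induction j with
  | zero => exact exitCount_zero_zero m
  | succ j ih =>
    rw [exitCount_succ_succ hj, exitCount_eq_zero_of_lt (by omega), ih (by omega)]

lemma exitCount_le_two_pow (m j n : ℕ) : exitCount m j n ≤ 2 ^ n := by
  unfold exitCount
  simpa [Nat.card_eq_fintype_card] using Nat.card_le_card_of_injective _
    (Subtype.val_injective (p := fun f : Fin n → Bool => ExitsAtZero m j f))

lemma latticeG_eq_exitCount (d s : ℕ) : latticeG d s = exitCount (d + 2) d (2 * s + d) := by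
  refine Nat.card_congr (Equiv.subtypeEquivRight fun f => ?_)
  have := rightsBefore_add_upsBefore_self f
  exact ⟨fun ⟨hend, hbefore⟩ => ⟨by omega, fun k hk => by have := hbefore k hk; omega⟩,
    fun ⟨hend, hbefore⟩ => ⟨by omega, fun k hk => by have := hbefore k hk; omega⟩⟩

section PowerSeries

variable {c : ℕ → ℝ} {C r x : ℝ}

lemma summable_mul_pow_of_bound (hc : ∀ s, |c s| * r ^ s ≤ C) (hx : |x| < r) :
    Summable fun s => c s * x ^ s := by
  have hr : 0 < r := (abs_nonneg x).trans_lt hx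
  refine .of_norm_bounded ((summable_geometric_of_lt_one (by positivity)
    ((div_lt_one hr).2 hx)).mul_left C) fun s => ?_
  calc ‖c s * x ^ s‖ = |c s| * r ^ s * (|x| / r) ^ s := by
        rw [Real.norm_eq_abs, abs_mul, abs_pow, div_pow]
        field_simp
    _ ≤ C * (|x| / r) ^ s := by gcongr; exact hc s

lemma hasDerivAt_tsum_mul_pow (hc : ∀ s, |c s| * r ^ s ≤ C) (hx : |x| < r) :
    HasDerivAt (fun y => ∑' s, c s * y ^ s) (∑' s, c s * (s * x ^ (s - 1))) x := by
  obtain ⟨q, hxq, hqr⟩ := exists_between hx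
  have hq : 0 < q := (abs_nonneg x).trans_lt hxq
  have hr : 0 < r := hq.trans hqr
  have hqr' : ‖q / r‖ < 1 := by
    rwa [Real.norm_eq_abs, abs_of_pos (by positivity), div_lt_one hr]
  have hu : Summable fun s : ℕ => C / q * (s * (q / r) ^ s) := by
    simpa using (summable_pow_mul_geometric_of_norm_lt_one 1 hqr').mul_left (C / q)
  have hxI : x ∈ Set.Ioo (-q) q := abs_lt.1 hxq
  refine hasDerivAt_tsum_of_isPreconnected hu isOpen_Ioo isPreconnected_Ioo
    (fun s y _ => (hasDerivAt_pow s y).const_mul (c s)) (fun s y hy => ?_) hxI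
    (summable_mul_pow_of_bound hc hx) hxI
  have hyq : |y| ≤ q := (abs_lt.2 hy).le
  rcases s with _ | t
  · simp
  have hct : |c (t + 1)| ≤ C / r ^ (t + 1) := (le_div_iff₀ (by positivity)).2 (hc _)
  calc ‖c (t + 1) * ((t + 1 : ℕ) * y ^ (t + 1 - 1))‖ = |c (t + 1)| * ((t + 1) * |y| ^ t) := by
        simp only [Real.norm_eq_abs, abs_mul, abs_pow, Nat.add_sub_cancel, Nat.abs_cast]
        push_cast
        ring
    _ ≤ C / r ^ (t + 1) * ((t + 1) * q ^ t) := by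
        gcongr
        exact (abs_nonneg _).trans hct
    _ = C / q * ((t + 1 : ℕ) * (q / r) ^ (t + 1)) := by
        rw [div_pow]
        field_simp
        push_cast
        ring

end PowerSeries

section Recurrence

variable {K : Type*} [Field K] {x : K}

lemma geom_combination_rec {a b : K} (ha : a = x * a ^ 2 + 1) (hb : b = x * b ^ 2 + 1)
    (A B : K) (i : ℕ) :
    A * a ^ (i + 1) + B * b ^ (i + 1) =
      x * (A * a ^ (i + 2) + B * b ^ (i + 2)) + (A * a ^ i + B * b ^ i) := by
  linear_combination (A * a ^ i) * ha + (B * b ^ i) * hb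

variable {m : ℕ} {g u : ℕ → K}

lemma mul_eq_mul_of_rec (hx : x ≠ 0) (hg : ∀ i, i + 2 ≤ m → g (i + 1) = x * g (i + 2) + g i)
    (hu : ∀ i, i + 2 ≤ m → u (i + 1) = x * u (i + 2) + u i) (hg0 : g 0 = 0) (hu0 : u 0 = 0) :
    ∀ i ≤ m, g i * u 1 = g 1 * u i := by
  intro i
  induction i using Nat.twoStepInduction with
  | zero => simp [hg0, hu0]
  | one => intro _; ring
  | more i ih0 ih1 =>
    intro hi
    refine mul_left_cancel₀ hx ?_
    linear_combination (-u 1) * hg i hi + g 1 * hu i hi + ih1 (by omega) - ih0 (by omega)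

lemma eq_zero_of_rec (hx : x ≠ 0) (hg : ∀ i, i + 2 ≤ m → g (i + 1) = x * g (i + 2) + g i)
    (hu : ∀ i, i + 2 ≤ m → u (i + 1) = x * u (i + 2) + u i) (hg0 : g 0 = 0) (hgm : g m = 0)
    (hu0 : u 0 = 0) (hu1 : u 1 ≠ 0) (hum : u m ≠ 0) {i : ℕ} (hi : i ≤ m) : g i = 0 := by
  have key := mul_eq_mul_of_rec hx hg hu hg0 hu0
  have hg1 : g 1 = 0 := by
    have := key m le_rfl
    rw [hgm, zero_mul] at this
    exact (mul_eq_zero.1 this.symm).resolve_right hum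
  have := key i hi
  rw [hg1, zero_mul] at this
  exact (mul_eq_zero.1 this).resolve_right hu1

end Recurrence

noncomputable def exitGF (m j : ℕ) (x : ℝ) : ℝ :=
  ∑' s : ℕ, (exitCount m j (2 * s + j) : ℝ) * x ^ s

lemma abs_exitCount_mul_le (m j s : ℕ) :
    |(exitCount m j (2 * s + j) : ℝ)| * (1 / 4) ^ s ≤ 2 ^ j := by
  have h : (exitCount m j (2 * s + j) : ℝ) ≤ 2 ^ j * 4 ^ s := by
    calc (exitCount m j (2 * s + j) : ℝ) ≤ 2 ^ (2 * s + j) := by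
          exact_mod_cast exitCount_le_two_pow m j _
      _ = 2 ^ j * 4 ^ s := by rw [pow_add, pow_mul]; norm_num; ring
  rw [Nat.abs_cast, div_pow, one_pow, mul_one_div, div_le_iff₀ (by positivity)]
  exact h

lemma exitGF_zero (m : ℕ) (x : ℝ) : exitGF m 0 x = 1 := by
  rw [exitGF, tsum_eq_single 0 fun s hs => by rw [exitCount_from_zero m (by omega)]; simp]
  simp [exitCount_zero_zero]

lemma exitGF_self {m : ℕ} (hm : 0 < m) (x : ℝ) : exitGF m m x = 0 := by
  have (s : ℕ) : exitCount m m (2 * s + m) = 0 := exitCount_from_top m (by omega)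
  simp [exitGF, this]

lemma exitGF_succ {m j : ℕ} (hj : j + 1 < m) {x : ℝ} (hx : |x| < 1 / 4) :
    exitGF m (j + 1) x = x * exitGF m (j + 2) x + exitGF m j x := by
  have hsum (i : ℕ) := summable_mul_pow_of_bound (abs_exitCount_mul_le m i) hx
  have hterm (t : ℕ) : (exitCount m (j + 1) (2 * (t + 1) + (j + 1)) : ℝ) * x ^ (t + 1) =
      x * ((exitCount m (j + 2) (2 * t + (j + 2)) : ℝ) * x ^ t) +
        (exitCount m j (2 * (t + 1) + j) : ℝ) * x ^ (t + 1) := by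
    rw [show 2 * (t + 1) + (j + 1) = 2 * t + (j + 2) + 1 by ring, exitCount_succ_succ hj,
      show 2 * t + (j + 2) = 2 * (t + 1) + j by ring]
    push_cast
    ring
  rw [exitGF, (hsum _).tsum_eq_zero_add, tsum_congr hterm,
    ((hsum _).mul_left x).tsum_add ((summable_nat_add_iff 1).2 (hsum j)), tsum_mul_left,
    exitGF, exitGF, (hsum j).tsum_eq_zero_add]
  simp [exitCount_self hj, exitCount_self (Nat.lt_of_succ_lt hj)]
  ring

section ClosedForm

variable {α : ℝ}

lemma abs_mul_one_sub_lt_quarter (hα0 : 0 < α) (hα1 : α < 1 / 2) : |α * (1 - α)| < 1 / 4 := by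
  rw [abs_of_pos (by nlinarith)]
  nlinarith [sq_pos_of_pos (by linarith : 0 < 1 - 2 * α)]

lemma pow_lt_one_sub_pow (hα0 : 0 < α) (hα1 : α < 1 / 2) {m : ℕ} (hm : m ≠ 0) :
    α ^ m < (1 - α) ^ m :=
  pow_lt_pow_left₀ (by linarith) hα0.le hm

lemma exitGF_eq (hα0 : 0 < α) (hα1 : α < 1 / 2) {m j : ℕ} (hm : 0 < m) (hj : j ≤ m) :
    exitGF m j (α * (1 - α)) = ((1 - α) ^ (m - j) - α ^ (m - j)) / ((1 - α) ^ m - α ^ m) := by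
  have hα : α ≠ 0 := hα0.ne'
  have hα' : 1 - α ≠ 0 := by linarith
  have hD : (1 - α) ^ m - α ^ m ≠ 0 := (sub_pos.2 (pow_lt_one_sub_pow hα0 hα1 hm.ne')).ne'
  -- `α⁻¹` and `(1 - α)⁻¹` are the roots of the characteristic equation `x t² - t + 1 = 0`.
  have ha : α⁻¹ = α * (1 - α) * α⁻¹ ^ 2 + 1 := by field_simp; ring
  have hb : (1 - α)⁻¹ = α * (1 - α) * (1 - α)⁻¹ ^ 2 + 1 := by field_simp; ring
  set A := (1 - α) ^ m / ((1 - α) ^ m - α ^ m)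
  set B := -(α ^ m / ((1 - α) ^ m - α ^ m))
  have hφ (i : ℕ) (hi : i ≤ m) : A * (1 - α)⁻¹ ^ i + B * α⁻¹ ^ i =
      ((1 - α) ^ (m - i) - α ^ (m - i)) / ((1 - α) ^ m - α ^ m) := by
    rw [pow_sub₀ _ hα' hi, pow_sub₀ _ hα hi, inv_pow, inv_pow]
    ring
  have hinv {n : ℕ} (hn : n ≠ 0) : ((1 - α) ^ n)⁻¹ < (α ^ n)⁻¹ :=
    (inv_lt_inv₀ (pow_pos (by linarith) n) (pow_pos hα0 n)).2 (pow_lt_one_sub_pow hα0 hα1 hn)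
  have hg := eq_zero_of_rec
    (g := fun i => exitGF m i (α * (1 - α)) - (A * (1 - α)⁻¹ ^ i + B * α⁻¹ ^ i))
    (u := fun i => α⁻¹ ^ i - (1 - α)⁻¹ ^ i) (mul_ne_zero hα hα')
    (fun i hi => by
      linear_combination exitGF_succ (m := m) (j := i) (by omega)
        (abs_mul_one_sub_lt_quarter hα0 hα1) - geom_combination_rec hb ha A B i)
    (fun i _ => by linear_combination geom_combination_rec ha hb 1 (-1) i)
    (by simp only [exitGF_zero, A, B]; field_simp; ring)
    (by simp only [exitGF_self hm, A, B, inv_pow]; field_simp; ring)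
    (by simp) (sub_ne_zero.2 (by simpa using (hinv one_ne_zero).ne'))
    (sub_ne_zero.2 (by simpa only [inv_pow] using (hinv hm.ne').ne')) hj
  rw [← hφ j hj]
  linear_combination hg

end ClosedForm

theorem tsum_latticeG_mul_pow (d : ℕ) {α : ℝ} (hα0 : 0 < α) (hα1 : α < 1 / 2) :
    ∑' s : ℕ, (latticeG d s : ℝ) * (α * (1 - α)) ^ s =
      (1 - 2 * α) / ((1 - α) ^ (d + 2) - α ^ (d + 2)) := by
  simp_rw [latticeG_eq_exitCount]
  rw [← exitGF, exitGF_eq hα0 hα1 (by omega) (by omega), Nat.add_sub_cancel_left]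
  ring

lemma hasDerivAt_one_sub_two_mul_div (d : ℕ) {α : ℝ} (hD : (1 - α) ^ (d + 2) - α ^ (d + 2) ≠ 0) :
    HasDerivAt (fun β : ℝ => (1 - 2 * β) / ((1 - β) ^ (d + 2) - β ^ (d + 2)))
      ((-2 * ((1 - α) ^ (d + 2) - α ^ (d + 2)) +
          (1 - 2 * α) * ((d + 2) * ((1 - α) ^ (d + 1) + α ^ (d + 1)))) /
        ((1 - α) ^ (d + 2) - α ^ (d + 2)) ^ 2) α := by
  have hnum : HasDerivAt (fun β : ℝ => 1 - 2 * β) (-2) α := by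
    simpa using ((hasDerivAt_id α).const_mul 2).const_sub 1
  have hden : HasDerivAt (fun β : ℝ => (1 - β) ^ (d + 2) - β ^ (d + 2))
      (-((d + 2) * ((1 - α) ^ (d + 1) + α ^ (d + 1)))) α := by
    refine ((((hasDerivAt_id α).const_sub 1).pow (d + 2)).sub
      (hasDerivAt_pow (d + 2) α)).congr_deriv ?_
    rw [show d + 2 - 1 = d + 1 by omega, id]
    push_cast
    ring
  exact (hnum.div hden hD).congr_deriv (by ring)

theorem stmt_17_general (d : ℕ) (α : ℝ) (hα0 : 0 < α) (hα1 : α < 1 / 2) :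
    ∑' s : ℕ, (s : ℝ) * (latticeG d s : ℝ) * (α * (1 - α)) ^ s =
      (d + 2) * (α * (1 - α)) * ((1 - α) ^ (d + 1) + α ^ (d + 1)) /
          ((1 - α) ^ (d + 2) - α ^ (d + 2)) ^ 2 -
        2 * (α * (1 - α)) /
          ((1 - 2 * α) * ((1 - α) ^ (d + 2) - α ^ (d + 2))) := by
  have hD : (1 - α) ^ (d + 2) - α ^ (d + 2) ≠ 0 :=
    (sub_pos.2 (pow_lt_one_sub_pow hα0 hα1 (by omega))).ne'
  have h2α : 1 - 2 * α ≠ 0 := by linarith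
  have hbound (s : ℕ) : |(latticeG d s : ℝ)| * (1 / 4) ^ s ≤ 2 ^ d := by
    simpa only [latticeG_eq_exitCount] using abs_exitCount_mul_le (d + 2) d s
  have hq : HasDerivAt (fun β : ℝ => β * (1 - β)) (1 - 2 * α) α :=
    ((hasDerivAt_id α).mul ((hasDerivAt_id α).const_sub 1)).congr_deriv (by simp; ring)
  have hseries := (hasDerivAt_tsum_mul_pow hbound
    (abs_mul_one_sub_lt_quarter hα0 hα1)).comp α hq
  have hclosed := (hasDerivAt_one_sub_two_mul_div d hD).congr_of_eventuallyEq
    (f₁ := (fun y => ∑' s, (latticeG d s : ℝ) * y ^ s) ∘ fun β => β * (1 - β))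
    (by
      filter_upwards [Ioo_mem_nhds hα0 hα1] with β hβ
      exact tsum_latticeG_mul_pow d hβ.1 hβ.2)
  have hderiv := hseries.unique hclosed
  have hterm : ∑' s : ℕ, (s : ℝ) * (latticeG d s : ℝ) * (α * (1 - α)) ^ s =
      α * (1 - α) * ∑' s : ℕ, (latticeG d s : ℝ) * (s * (α * (1 - α)) ^ (s - 1)) := by
    rw [← tsum_mul_left]
    congr 1 with (_ | s)
    · simp
    · simp only [Nat.add_sub_cancel, pow_succ]
      ring
  rw [hterm, eq_div_of_mul_eq h2α hderiv]
  generalize 1 - 2 * α = y at h2α ⊢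
  field_simp
  ring

/-- Lemma 4, second identity. -/
theorem stmt_17 (d : ℕ) (hd : 1 ≤ d) (α : ℝ) (hα0 : 0 < α) (hα1 : α < 1 / 2) :
    ∑' s : ℕ, (s : ℝ) * (latticeG d s : ℝ) * (α * (1 - α)) ^ s =
      (d + 2) * (α * (1 - α)) * ((1 - α) ^ (d + 1) + α ^ (d + 1)) /
          ((1 - α) ^ (d + 2) - α ^ (d + 2)) ^ 2 -
        2 * (α * (1 - α)) /
          ((1 - 2 * α) * ((1 - α) ^ (d + 2) - α ^ (d + 2))) :=
  stmt_17_general d α hα0 hα1
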